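/- Let (X_t) be a positive strong Markov process with no negative jumps, and let T_b = inf{t ≥ 0 : X_t < b}. If for all sufficiently large b, sup_{x ≥ b} E_x[T_b] < ∞, then lim_{b→∞} lim_{x→∞} E_x[T_b] = 0. -/

import Mathlib

open Filter Topology ENNReal

/-!
Write `L b = lim_{x→∞} E_x[T_b] = ⨆ x, E_x[T_b]`. Letting `x → ∞` in the renewal identity gives
`L b = L x' + E_{x'}[T_b]` for `b < x'`. Fix `b₀` with `L b₀ < ∞`; then
`L x' = L b₀ - E_{x'}[T_{b₀}] → L b₀ - L b₀ = 0` as `x' → ∞`.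
-/

theorem iSup_le_biSup_Ici_of_monotone {α β : Type*} [LinearOrder α] [CompleteLattice β]
    {f : α → β} (hf : Monotone f) (b : α) :
    ⨆ x, f x ≤ ⨆ (x : α) (_ : b ≤ x), f x :=
  iSup_le fun x => le_iSup₂_of_le (max x b) (le_max_right x b) (hf (le_max_left x b))

section Renewal

variable {α : Type*} [LinearOrder α] [NoMaxOrder α] {e : α → α → ℝ≥0∞}

theorem iSup_eq_iSup_add_of_renewal (hmono : ∀ b, Monotone (e b))
    (hrenewal : ∀ b x' x, b < x' → x' < x → e b x = e x' x + e b x') {b x' : α} (h : b < x') :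
    ⨆ x, e b x = (⨆ x, e x' x) + e b x' := by
  have : Nonempty α := ⟨b⟩
  have hlim : Tendsto (fun x => e x' x + e b x') atTop (𝓝 ((⨆ x, e x' x) + e b x')) :=
    (tendsto_atTop_iSup (hmono x')).add_const _
  refine tendsto_nhds_unique (tendsto_atTop_iSup (hmono b)) (hlim.congr' ?_)
  filter_upwards [eventually_gt_atTop x'] with x hx
  exact (hrenewal b x' x h hx).symm

theorem tendsto_iSup_atTop_zero_of_renewal (hmono : ∀ b, Monotone (e b))
    (hrenewal : ∀ b x' x, b < x' → x' < x → e b x = e x' x + e b x') {b₀ : α}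
    (hfin : ⨆ x, e b₀ x ≠ ∞) :
    Tendsto (fun b => ⨆ x, e b x) atTop (𝓝 0) := by
  have : Nonempty α := ⟨b₀⟩
  have hlim : Tendsto (fun x' => (⨆ x, e b₀ x) - e b₀ x') atTop
      (𝓝 ((⨆ x, e b₀ x) - ⨆ x, e b₀ x)) :=
    ENNReal.Tendsto.sub tendsto_const_nhds (tendsto_atTop_iSup (hmono b₀)) (Or.inl hfin)
  rw [tsub_self] at hlim
  refine hlim.congr' ?_
  filter_upwards [eventually_gt_atTop b₀] with x' hx'
  have hfin' : e b₀ x' ≠ ∞ := ne_top_of_le_ne_top hfin (le_iSup _ x')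
  exact (ENNReal.eq_sub_of_add_eq hfin'
    (iSup_eq_iSup_add_of_renewal hmono hrenewal hx').symm).symm

end Renewal

theorem stmt_4_general (e : ℝ → ℝ → ℝ≥0∞)
    (hmono : ∀ b, Monotone (e b))
    (hrenewal : ∀ b x' x, b < x' → x' < x → e b x = e x' x + e b x')
    (hfin : ∃ b₀ : ℝ, ∀ b, b₀ ≤ b → (⨆ (x : ℝ) (_ : b ≤ x), e b x) < ⊤) :
    ∃ L : ℝ → ℝ≥0∞,
      (∀ b : ℝ, Tendsto (fun x => e b x) atTop (𝓝 (L b))) ∧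
        Tendsto L atTop (𝓝 0) := by
  obtain ⟨b₀, hb₀⟩ := hfin
  have hL₀ : ⨆ x, e b₀ x ≠ ∞ :=
    ((iSup_le_biSup_Ici_of_monotone (hmono b₀) b₀).trans_lt (hb₀ b₀ le_rfl)).ne
  exact ⟨fun b => ⨆ x, e b x, fun b => tendsto_atTop_iSup (hmono b),
    tendsto_iSup_atTop_zero_of_renewal hmono hrenewal hL₀⟩

/-- For a positive strong Markov process with no negative jumps, with `e b x = E_x[T_b]`
the expected first passage time below `b` starting from `x`: `e b x` is nondecreasing in
`x`, nonincreasing in `b`, satisfies the renewal identity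
`E_x[T_b] = E_x[T_{x'}] + E_{x'}[T_b]` for `x > x' > b`.  If for all sufficiently large
`b` one has `sup_{x ≥ b} E_x[T_b] < ∞`, then `lim_{b→∞} lim_{x→∞} E_x[T_b] = 0`. -/
theorem stmt_4 (e : ℝ → ℝ → ℝ≥0∞)
    (hmono : ∀ b, Monotone (e b))
    (hanti : ∀ x, Antitone (fun b => e b x))
    (hrenewal : ∀ b x' x, b < x' → x' < x → e b x = e x' x + e b x')
    (hfin : ∃ b₀ : ℝ, ∀ b, b₀ ≤ b → (⨆ (x : ℝ) (_ : b ≤ x), e b x) < ⊤) :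
    ∃ L : ℝ → ℝ≥0∞,
      (∀ b : ℝ, Tendsto (fun x => e b x) atTop (𝓝 (L b))) ∧
        Tendsto L atTop (𝓝 0) :=
  stmt_4_general e hmono hrenewal hfin
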